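/- arXiv:2003.07646 — 8 statements merged into one kernel-verified Lean document; each statement's English description precedes it below -/
import Mathlib

section
/- Let U_G ∈ ℝ^{n×n} and U_F ∈ ℝ^{n'×n'} be orthogonal matrices, and define convolutions x ∗_G y = U_G · diag(U_Gᵀ x) · U_Gᵀ y for x,y ∈ ℝⁿ, x ∗_F y = U_F · diag(U_Fᵀ x) · U_Fᵀ y for x,y ∈ ℝ^{n'}, and on the product, x ∗ y = (U_G ⊗ U_F) · diag((U_G ⊗ U_F)ᵀ x) · (U_G ⊗ U_F)ᵀ y for x,y ∈ ℝ^{nn'}. Then for all f, f' ∈ ℝⁿ and e, e' ∈ ℝ^{n'} one has (f ⊗ e) ∗ (f' ⊗ e') = (f ∗_G f') ⊗ (e ∗_F e'). -/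
open Matrix
open scoped Kronecker

/-- The graph convolution associated with an orthogonal Fourier matrix `U`:
`x ∗ y = U · diag(Uᵀ x) · Uᵀ y`. -/
def graphConv {m : Type*} [Fintype m] [DecidableEq m]
    (U : Matrix m m ℝ) (x y : m → ℝ) : m → ℝ :=
  U *ᵥ (Matrix.diagonal (Uᵀ *ᵥ x) *ᵥ (Uᵀ *ᵥ y))

/-- Convolution of tensor-product signals on the Cartesian product graph factorizes into the
tensor product of the convolutions on the factors. -/
theorem stmt_4 {n n' : ℕ}
    (UG : Matrix (Fin n) (Fin n) ℝ) (UF : Matrix (Fin n') (Fin n') ℝ)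
    (hUG : UGᵀ * UG = 1) (hUF : UFᵀ * UF = 1)
    (f f' : Fin n → ℝ) (e e' : Fin n' → ℝ) :
    graphConv (UG ⊗ₖ UF) (fun p : Fin n × Fin n' => f p.1 * e p.2)
        (fun p : Fin n × Fin n' => f' p.1 * e' p.2) =
      fun p : Fin n × Fin n' => graphConv UG f f' p.1 * graphConv UF e e' p.2 := by
  have key : ∀ {α β : Type} [Fintype α] [Fintype β] (a c : α → ℝ) (b d : β → ℝ),
      (∑ i, ∑ j, a i * b j * (c i * d j)) = (∑ i, a i * c i) * (∑ j, b j * d j) := by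
    intro α β _ _ a c b d
    rw [Finset.sum_mul_sum]
    exact Finset.sum_congr rfl fun i _ => Finset.sum_congr rfl fun j _ => by ring
  funext p
  simp only [graphConv, mulVec, dotProduct, Matrix.diagonal_apply, transpose_apply,
    kroneckerMap_apply, Fintype.sum_prod_type, Prod.mk.injEq, ite_and, ite_mul, zero_mul,
    Finset.sum_ite_eq, Finset.mem_univ, if_true, key]
  rw [Finset.sum_mul_sum]
  exact Finset.sum_congr rfl fun i _ => Finset.sum_congr rfl fun j _ => by ring
end

section
/- Let U_G ∈ ℝ^{n×n} and U_F ∈ ℝ^{n'×n'} be orthogonal matrices, and let f ∈ ℝⁿ and e ∈ ℝ^{n'} be positive definite graph basis functions with respect to U_G and U_F respectively, i.e., the kernel matrices K_f = U_G · diag(U_Gᵀ f) · U_Gᵀ and K_e = U_F · diag(U_Fᵀ e) · U_Fᵀ are positive definite. Then the Kronecker product vector f ⊗ e ∈ ℝ^{nn'} is a positive definite graph basis function with respect to the orthogonal matrix U_G ⊗ U_F, i.e., the matrix (U_G ⊗ U_F) · diag((U_G ⊗ U_F)ᵀ (f ⊗ e)) · (U_G ⊗ U_F)ᵀ is positive definite;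 moreover this matrix equals K_f ⊗ K_e. -/
open Matrix
open scoped Kronecker

/-!
The Fourier transform of `f ⊗ e` with respect to `U_G ⊗ U_F` is `f̂ ⊗ ê`, so its diagonal matrix
is `diag f̂ ⊗ diag ê`, and the mixed-product property of `⊗ₖ` gives `K_{f⊗e} = K_f ⊗ K_e`.
Positive definiteness follows because Kronecker products of positive definite matrices are
positive definite.
-/

namespace Matrix

variable {l m n p R : Type*} [Fintype m] [Fintype p] [CommSemiring R]

theorem kronecker_mulVec_kronecker (A : Matrix l m R) (B : Matrix n p R) (x : m → R)
    (y : p → R) :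
    (A ⊗ₖ B) *ᵥ (fun q => x q.1 * y q.2) = fun q => (A *ᵥ x) q.1 * (B *ᵥ y) q.2 := by
  funext q
  simp only [mulVec, dotProduct, kroneckerMap_apply, Fintype.sum_prod_type, Finset.sum_mul_sum]
  exact Finset.sum_congr rfl fun i _ => Finset.sum_congr rfl fun j _ => by ring

variable [DecidableEq m] [DecidableEq p]

/-- The kernel matrix `K_f` of `f` with respect to the graph Fourier basis `U`. -/
def gbfKernel (U : Matrix m m R) (f : m → R) : Matrix m m R :=
  U * diagonal (Uᵀ *ᵥ f) * Uᵀ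

theorem gbfKernel_kronecker (U : Matrix m m R) (V : Matrix p p R) (f : m → R) (e : p → R) :
    gbfKernel (U ⊗ₖ V) (fun q => f q.1 * e q.2) = gbfKernel U f ⊗ₖ gbfKernel V e := by
  rw [gbfKernel, gbfKernel, gbfKernel, ← kroneckerMap_transpose, kronecker_mulVec_kronecker,
    ← diagonal_kronecker_diagonal, mul_kronecker_mul, mul_kronecker_mul]

end Matrix

theorem stmt_5_general {n n' : ℕ}
    (UG : Matrix (Fin n) (Fin n) ℝ) (UF : Matrix (Fin n') (Fin n') ℝ)
    (f : Fin n → ℝ) (e : Fin n' → ℝ)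
    (hf : (UG * Matrix.diagonal (UGᵀ *ᵥ f) * UGᵀ).PosDef)
    (he : (UF * Matrix.diagonal (UFᵀ *ᵥ e) * UFᵀ).PosDef) :
    ((UG ⊗ₖ UF) *
        Matrix.diagonal ((UG ⊗ₖ UF)ᵀ *ᵥ fun p : Fin n × Fin n' => f p.1 * e p.2) *
        (UG ⊗ₖ UF)ᵀ).PosDef ∧
      (UG ⊗ₖ UF) *
          Matrix.diagonal ((UG ⊗ₖ UF)ᵀ *ᵥ fun p : Fin n × Fin n' => f p.1 * e p.2) *
          (UG ⊗ₖ UF)ᵀ =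
        (UG * Matrix.diagonal (UGᵀ *ᵥ f) * UGᵀ) ⊗ₖ (UF * Matrix.diagonal (UFᵀ *ᵥ e) * UFᵀ) := by
  have hkernel := gbfKernel_kronecker UG UF f e
  exact ⟨(congrArg PosDef hkernel).mpr (hf.kronecker he), hkernel⟩

/-- If `f` and `e` are positive definite graph basis functions with respect to orthogonal
Fourier matrices `UG` and `UF`, then the Kronecker product vector `f ⊗ e` is a positive
definite graph basis function with respect to `UG ⊗ UF`, and its kernel matrix is the
Kronecker product of the kernel matrices of `f` and `e`. -/
theorem stmt_5 {n n' : ℕ}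
    (UG : Matrix (Fin n) (Fin n) ℝ) (UF : Matrix (Fin n') (Fin n') ℝ)
    (hUG : UGᵀ * UG = 1) (hUF : UFᵀ * UF = 1)
    (f : Fin n → ℝ) (e : Fin n' → ℝ)
    (hf : (UG * Matrix.diagonal (UGᵀ *ᵥ f) * UGᵀ).PosDef)
    (he : (UF * Matrix.diagonal (UFᵀ *ᵥ e) * UFᵀ).PosDef) :
    ((UG ⊗ₖ UF) *
        Matrix.diagonal ((UG ⊗ₖ UF)ᵀ *ᵥ fun p : Fin n × Fin n' => f p.1 * e p.2) *
        (UG ⊗ₖ UF)ᵀ).PosDef ∧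
      (UG ⊗ₖ UF) *
          Matrix.diagonal ((UG ⊗ₖ UF)ᵀ *ᵥ fun p : Fin n × Fin n' => f p.1 * e p.2) *
          (UG ⊗ₖ UF)ᵀ =
        (UG * Matrix.diagonal (UGᵀ *ᵥ f) * UGᵀ) ⊗ₖ (UF * Matrix.diagonal (UFᵀ *ᵥ e) * UFᵀ) :=
  stmt_5_general UG UF f e hf he
end

section
/- Let K ∈ ℝ^{n×n} be symmetric positive definite, let w_1,…,w_N ∈ {1,…,n} be N distinct indices, let y_1,…,y_N ∈ ℝ and γ > 0. Let K_W ∈ ℝ^{N×N} be the submatrix (K_W)_{ij} = K_{w_i w_j}, let c ∈ ℝᴺ be the unique solution of (K_W + γN·I_N) c = (y_1,…,y_N)ᵀ, and define x* ∈ ℝⁿ by x*_v = Σ_{i=1}^N c_i K_{v, w_i}. Then x* is the unique minimizer over x ∈ ℝⁿ of the regularized least squares functional F(x) = (1/N) Σ_{i=1}^N (x_{w_i} − y_i)² + γ · xᵀK⁻¹x. -/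
/-!
Write `x = x* + d`. Since `x* = K a` with `a = ∑ⱼ cⱼ e_{w j}`, the cross term of the penalty is
`2γ dᵀK⁻¹x* = 2γ ∑ᵢ cᵢ d (w i)`, while the linear system says that the residual of `x*` at `w i`
is `-γN cᵢ`, so the cross term of the data fit is `-2γ ∑ᵢ cᵢ d (w i)`. They cancel, leaving
`F (x* + d) = F x* + (1/N) ∑ᵢ d (w i)² + γ dᵀK⁻¹d`, and `K⁻¹` is positive definite.
-/

open Matrix

namespace Matrix

variable {ι m R : Type*} [Fintype ι] [Fintype m]

lemma IsSymm.dotProduct_mulVec_comm [CommSemiring R] {A : Matrix ι ι R} (hA : A.IsSymm)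
    (u v : ι → R) : u ⬝ᵥ (A *ᵥ v) = v ⬝ᵥ (A *ᵥ u) := by
  rw [dotProduct_mulVec, ← mulVec_transpose, hA.eq, dotProduct_comm]

lemma IsSymm.add_dotProduct_mulVec_add [CommRing R] {A : Matrix ι ι R} (hA : A.IsSymm)
    (u v : ι → R) :
    (u + v) ⬝ᵥ (A *ᵥ (u + v)) = u ⬝ᵥ (A *ᵥ u) + 2 * (v ⬝ᵥ (A *ᵥ u)) + v ⬝ᵥ (A *ᵥ v) := by
  rw [mulVec_add, add_dotProduct, dotProduct_add, dotProduct_add,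
    hA.dotProduct_mulVec_comm u v]
  ring

variable [DecidableEq ι]

lemma mulVec_sum_single [CommSemiring R] {n : Type*} (A : Matrix n ι R) (w : m → ι)
    (c : m → R) : A *ᵥ ∑ j, Pi.single (w j) (c j) = fun v => ∑ j, c j * A v (w j) := by
  ext v
  simp [mulVec_sum, mul_comm]

lemma dotProduct_sum_single [CommSemiring R] (u : ι → R) (w : m → ι) (c : m → R) :
    u ⬝ᵥ ∑ j, Pi.single (w j) (c j) = ∑ j, c j * u (w j) := by
  simp [dotProduct_sum, mul_comm]

lemma sub_eq_neg_smul_of_add_smul_one_mulVec_eq [DecidableEq m] [CommRing R]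
    {A : Matrix m m R} {t : R} {c y : m → R} (h : (A + t • 1) *ᵥ c = y) :
    A *ᵥ c - y = -(t • c) := by
  rw [← h, add_mulVec, smul_mulVec, one_mulVec]
  abel

end Matrix

section RegularizedLeastSquares

variable {ι m : Type*} [Fintype m]

def kernelExpansion (K : Matrix ι ι ℝ) (w : m → ι) (c : m → ℝ) : ι → ℝ :=
  fun v => ∑ j, c j * K v (w j)

lemma kernelExpansion_comp (K : Matrix ι ι ℝ) (w : m → ι) (c : m → ℝ) :
    kernelExpansion K w c ∘ w = K.submatrix w w *ᵥ c := by
  ext i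
  simp [kernelExpansion, mulVec, dotProduct, mul_comm]

variable [Fintype ι] [DecidableEq ι]

lemma kernelExpansion_eq_mulVec (K : Matrix ι ι ℝ) (w : m → ι) (c : m → ℝ) :
    kernelExpansion K w c = K *ᵥ ∑ j, Pi.single (w j) (c j) :=
  (mulVec_sum_single K w c).symm

noncomputable def rlsObjective (K : Matrix ι ι ℝ) (w : m → ι) (y : m → ℝ) (γ N : ℝ)
    (x : ι → ℝ) : ℝ :=
  1 / N * ∑ i, (x (w i) - y i) ^ 2 + γ * (x ⬝ᵥ (K⁻¹ *ᵥ x))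

theorem rlsObjective_kernelExpansion_add [DecidableEq m] {K : Matrix ι ι ℝ} (hK : K.IsSymm)
    (hdet : IsUnit K.det) {w : m → ι} {y c : m → ℝ} {γ N : ℝ} (hN : N ≠ 0)
    (hc : (K.submatrix w w + (γ * N) • 1) *ᵥ c = y) (d : ι → ℝ) :
    rlsObjective K w y γ N (kernelExpansion K w c + d) =
      rlsObjective K w y γ N (kernelExpansion K w c) +
        (1 / N * ∑ i, d (w i) ^ 2 + γ * (d ⬝ᵥ (K⁻¹ *ᵥ d))) := by
  set x := kernelExpansion K w c with hx
  have hinv : K⁻¹ *ᵥ x = ∑ j, Pi.single (w j) (c j) := by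
    rw [hx, kernelExpansion_eq_mulVec, mulVec_mulVec, nonsing_inv_mul K hdet, one_mulVec]
  have hres (i : m) : x (w i) - y i = -(γ * N * c i) := by
    simpa [← kernelExpansion_comp] using
      congrFun (sub_eq_neg_smul_of_add_smul_one_mulVec_eq hc) i
  have hcross : d ⬝ᵥ (K⁻¹ *ᵥ x) = ∑ i, c i * d (w i) := by
    rw [hinv, dotProduct_sum_single]
  have hquad := hK.inv.add_dotProduct_mulVec_add x d
  simp only [rlsObjective, Pi.add_apply, hquad, hcross]
  have hsq (i : m) : (x (w i) + d (w i) - y i) ^ 2 =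
      (x (w i) - y i) ^ 2 + d (w i) ^ 2 - 2 * (γ * N) * (c i * d (w i)) := by
    rw [add_sub_right_comm, add_sq, hres]
    ring
  simp only [hsq, Finset.sum_sub_distrib, Finset.sum_add_distrib, ← Finset.mul_sum]
  field_simp
  ring

end RegularizedLeastSquares

theorem stmt_8_general {n N : ℕ} (hN : 0 < N)
    (K : Matrix (Fin n) (Fin n) ℝ) (hK : K.PosDef)
    (w : Fin N → Fin n)
    (y : Fin N → ℝ) (γ : ℝ) (hγ : 0 < γ)
    (c : Fin N → ℝ)
    (hc : (Matrix.of (fun i j => K (w i) (w j)) +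
        (γ * (N : ℝ)) • (1 : Matrix (Fin N) (Fin N) ℝ)) *ᵥ c = y) :
    ∀ x : Fin n → ℝ, x ≠ (fun v => ∑ j : Fin N, c j * K v (w j)) →
      (1 / (N : ℝ)) * (∑ i : Fin N, ((∑ j : Fin N, c j * K (w i) (w j)) - y i) ^ 2) +
          γ * ((fun v => ∑ j : Fin N, c j * K v (w j)) ⬝ᵥ
            (K⁻¹ *ᵥ fun v => ∑ j : Fin N, c j * K v (w j))) <
        (1 / (N : ℝ)) * (∑ i : Fin N, (x (w i) - y i) ^ 2) + γ * (x ⬝ᵥ (K⁻¹ *ᵥ x)) := by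
  intro x hx
  have hN' : (N : ℝ) ≠ 0 := by positivity
  have hKsymm : K.IsSymm := isHermitian_iff_isSymm.mp hK.isHermitian
  set xs := kernelExpansion K w c
  have hd : x - xs ≠ 0 := sub_ne_zero.mpr hx
  have key := rlsObjective_kernelExpansion_add hKsymm hK.det_pos.ne'.isUnit hN' hc (x - xs)
  rw [add_sub_cancel] at key
  have hpen : 0 < γ * ((x - xs) ⬝ᵥ (K⁻¹ *ᵥ (x - xs))) :=
    mul_pos hγ (by simpa using hK.inv.dotProduct_mulVec_pos hd)
  have hfit : 0 ≤ 1 / (N : ℝ) * ∑ i, (x - xs) (w i) ^ 2 := by positivity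
  change rlsObjective K w y γ N xs < rlsObjective K w y γ N x
  linarith

/-- The representer theorem / RLS solution: with a symmetric positive definite kernel `K`,
distinct labeled nodes `w i` with labels `y i`, and regularization `γ > 0`, the function
`x* v = ∑ i, c i * K v (w i)` with coefficients solving `(K_W + γ N I) c = y` is the unique
minimizer of the regularized least squares functional
`F(x) = (1/N) ∑ i (x (w i) - y i)² + γ xᵀ K⁻¹ x`. -/
theorem stmt_8 {n N : ℕ} (hN : 0 < N)
    (K : Matrix (Fin n) (Fin n) ℝ) (hK : K.PosDef)
    (w : Fin N → Fin n) (hw : Function.Injective w)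
    (y : Fin N → ℝ) (γ : ℝ) (hγ : 0 < γ)
    (c : Fin N → ℝ)
    (hc : (Matrix.of (fun i j => K (w i) (w j)) +
        (γ * (N : ℝ)) • (1 : Matrix (Fin N) (Fin N) ℝ)) *ᵥ c = y) :
    ∀ x : Fin n → ℝ, x ≠ (fun v => ∑ j : Fin N, c j * K v (w j)) →
      (1 / (N : ℝ)) * (∑ i : Fin N, ((∑ j : Fin N, c j * K (w i) (w j)) - y i) ^ 2) +
          γ * ((fun v => ∑ j : Fin N, c j * K v (w j)) ⬝ᵥ
            (K⁻¹ *ᵥ fun v => ∑ j : Fin N, c j * K v (w j))) <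
        (1 / (N : ℝ)) * (∑ i : Fin N, (x (w i) - y i) ^ 2) + γ * (x ⬝ᵥ (K⁻¹ *ᵥ x)) :=
  stmt_8_general hN K hK w y γ hγ c hc
end

section
/- Let K ∈ ℝ^{n×n} be symmetric positive definite with all entries strictly positive (K_{vw} > 0 for all v,w), let ψ ∈ ℝⁿ with ψ_v ∈ {−1,1}, and let K_ψ = diag(ψ)·K·diag(ψ). Fix a single labeled node w_1 with label y_1 ∈ {−1,1} satisfying ψ_{w_1} = y_1, and γ > 0. Then the RLS solution y*_v = (y_1 / (K_ψ(w_1,w_1) + γ)) · K_ψ(v, w_1) satisfies sign(y*_v) = ψ_v for every node v. -/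
open Matrix

/-- Consistency of the binary-feature-augmented RLS classifier with a single label: if the
kernel `K` is symmetric positive definite with strictly positive entries, `ψ` is a binary
(±1) feature map, `K_ψ = diag(ψ) K diag(ψ)`, and the single label `y₁ ∈ {−1,1}` at node
`w₁` is correctly classified by `ψ` (`ψ w₁ = y₁`), then for every `γ > 0` the RLS solution
`y*_v = (y₁/(K_ψ(w₁,w₁)+γ)) K_ψ(v,w₁)` satisfies `sign(y*_v) = ψ v` at every node. -/
theorem stmt_12 {n : ℕ} (K : Matrix (Fin n) (Fin n) ℝ) (hK : K.PosDef)
    (hKpos : ∀ v w : Fin n, 0 < K v w)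
    (ψ : Fin n → ℝ) (hψ : ∀ v : Fin n, ψ v = 1 ∨ ψ v = -1)
    (w1 : Fin n) (y1 : ℝ) (hy1 : y1 = 1 ∨ y1 = -1) (hmatch : ψ w1 = y1)
    (γ : ℝ) (hγ : 0 < γ) :
    ∀ v : Fin n,
      Real.sign ((y1 / ((Matrix.diagonal ψ * K * Matrix.diagonal ψ) w1 w1 + γ)) *
          (Matrix.diagonal ψ * K * Matrix.diagonal ψ) v w1) = ψ v := by
  intro v
  have hentry : ∀ i j, (Matrix.diagonal ψ * K * Matrix.diagonal ψ) i j = ψ i * K i j * ψ j := by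
    intro i j
    rw [Matrix.mul_diagonal, Matrix.diagonal_mul]
  rw [hentry, hentry]
  have hy2 : y1 * y1 = 1 := by rcases hy1 with h | h <;> rw [h] <;> norm_num
  have hden : ψ w1 * K w1 w1 * ψ w1 + γ = K w1 w1 + γ := by
    rw [hmatch]; nlinarith [hKpos w1 w1]
  rw [hden, hmatch]
  have hpos : 0 < K w1 w1 + γ := by linarith [hKpos w1 w1]
  have key : y1 / (K w1 w1 + γ) * (ψ v * K v w1 * y1) =
      ψ v * (K v w1 / (K w1 w1 + γ)) := by
    field_simp
    linear_combination ψ v * K v w1 * hy2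
  rw [key]
  have hq : 0 < K v w1 / (K w1 w1 + γ) := div_pos (hKpos v w1) hpos
  rcases hψ v with h | h <;> rw [h]
  · simpa using Real.sign_of_pos (by linarith : (0:ℝ) < 1 * (K v w1 / (K w1 w1 + γ)))
  · have : (-1 : ℝ) * (K v w1 / (K w1 w1 + γ)) < 0 := by nlinarith
    simpa using Real.sign_of_neg this
end

section
/- Let K ∈ ℝ^{n×n} be symmetric positive definite with all entries strictly positive, let ψ ∈ ℝⁿ with ψ_v ∈ {−1,1}, and let K_ψ = diag(ψ)·K·diag(ψ). Let w_1,…,w_N be N distinct nodes with labels y_i = ψ_{w_i} ∈ {−1,1}, and suppose the regularization parameter satisfies γ > 2·max_v K_{vv}. Let c ∈ ℝᴺ solve ((K_ψ)_W + γN·I_N) c = (y_1,…,y_N)ᵀ, where (K_ψ)_W is the N×N submatrix with entries K_ψ(w_i,w_j), and define y*_v = Σ_{i=1}^N c_i K_ψ(v,w_i). Then sign(y*_v) = ψ_v for every node v. -/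
/-! Put `d i = ψ (w i) * c i`. As `ψ² = 1`, conjugating by `diag ψ` turns the system into
`(K_W + γN) d = 1`, and `y*_v = ψ v * ∑ i, d i * K v (w i)`, so it suffices that every `d i > 0`.
Testing the system against `d` and using `K_W ⪰ 0` and Cauchy–Schwarz gives
`γN ‖d‖₂² ≤ ‖d‖₁ ≤ √N ‖d‖₂`, hence `γ ‖d‖₁ ≤ 1`. Positive semidefiniteness bounds every entry of
`K` by `γ / 2`, so `|(K_W d) i| ≤ 1 / 2` and `γN d i = 1 - (K_W d) i ≥ 1 / 2`. -/

open Matrix Finset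

namespace Matrix

variable {ι : Type*} [Fintype ι] [DecidableEq ι]

theorem PosSemidef.two_mul_apply_le_add {A : Matrix ι ι ℝ} (hA : A.PosSemidef) (i j : ι) :
    2 * A i j ≤ A i i + A j j := by
  have hsymm : A j i = A i j := by simpa using congrFun (congrFun hA.isHermitian i) j
  have := hA.dotProduct_mulVec_nonneg (Pi.single i 1 - Pi.single j 1)
  simp only [star_trivial, mulVec_sub, mulVec_single, MulOpposite.op_one, one_smul, dotProduct_sub,
    sub_dotProduct, single_dotProduct, col_apply, one_mul, hsymm, sub_nonneg, tsub_le_iff_right]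
    at this
  linarith

theorem mulVec_mul_eq_one_of_diagonal_mul_mul_diagonal_mulVec_eq {R : Type*} [CommRing R]
    {s : ι → R} (hs : ∀ i, s i * s i = 1) {A : Matrix ι ι R} {c : ι → R}
    (h : (diagonal s * A * diagonal s) *ᵥ c = s) : A *ᵥ (s * c) = 1 := by
  have hss : s * s = 1 := funext hs
  have hdiag : ∀ v, diagonal s *ᵥ v = s * v := fun v => funext fun i => mulVec_diagonal s v i
  simp only [← mulVec_mulVec, hdiag] at h
  calc A *ᵥ (s * c) = s * (s * A *ᵥ (s * c)) := by rw [← mul_assoc, hss, one_mul]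
    _ = 1 := by rw [h, hss]

theorem submatrix_diagonal_mul_mul_diagonal_add_smul_one {α R : Type*} [Fintype α] [DecidableEq α]
    [CommRing R] {s : α → R} (hs : ∀ a, s a * s a = 1) (A : Matrix α α R) (w : ι → α) (t : R) :
    (diagonal s * A * diagonal s).submatrix w w + t • 1 =
      diagonal (fun i => s (w i)) * (A.submatrix w w + t • 1) * diagonal (fun i => s (w i)) := by
  ext i j
  rcases eq_or_ne i j with rfl | hij
  · simp only [add_apply, submatrix_apply, diagonal_mul, mul_diagonal, smul_apply, one_apply_eq]
    linear_combination t * (hs (w i)).symm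
  · simp [diagonal_mul, mul_diagonal, hij]

variable {M : Matrix ι ι ℝ} {t : ℝ} {d : ι → ℝ}

theorem PosSemidef.mul_sum_abs_le_card (hM : M.PosSemidef) (ht : 0 ≤ t)
    (hd : (M + t • 1) *ᵥ d = 1) : t * ∑ i, |d i| ≤ Fintype.card ι := by
  set A := ∑ i, |d i|
  have hquad : d ⬝ᵥ (M *ᵥ d) + t * (d ⬝ᵥ d) = ∑ i, d i := by
    simpa [add_mulVec, smul_mulVec, dotProduct_add, dotProduct_one] using congrArg (d ⬝ᵥ ·) hd
  have hM0 : 0 ≤ d ⬝ᵥ (M *ᵥ d) := by simpa using hM.dotProduct_mulVec_nonneg d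
  have hsum : ∑ i, d i ≤ A := sum_le_sum fun i _ => le_abs_self (d i)
  have hCS : A ^ 2 ≤ Fintype.card ι * (d ⬝ᵥ d) := by
    simpa [sq_abs, dotProduct, sq] using sq_sum_le_card_mul_sum_sq (s := univ) (f := (|d ·|))
  have hAA : t * A * A ≤ Fintype.card ι * A := by nlinarith
  have hA0 : 0 ≤ A := sum_nonneg fun i _ => abs_nonneg (d i)
  rcases hA0.eq_or_lt with hA | hA
  · rw [← hA, mul_zero]; positivity
  · exact le_of_mul_le_mul_right hAA hA

theorem PosSemidef.pos_of_add_smul_one_mulVec_eq_one (hM : M.PosSemidef) {m : ℝ}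
    (hm : ∀ i j, |M i j| ≤ m) (hmt : m * Fintype.card ι < t) (hd : (M + t • 1) *ᵥ d = 1)
    (i : ι) : 0 < d i := by
  have hm0 : 0 ≤ m := (abs_nonneg _).trans (hm i i)
  have ht : 0 < t := lt_of_le_of_lt (by positivity) hmt
  have hdi : (M *ᵥ d) i + t * d i = 1 := by
    simpa [add_mulVec, smul_mulVec] using congrFun hd i
  have hMd : |(M *ᵥ d) i| ≤ m * ∑ j, |d j| := by
    rw [mul_sum]
    refine (abs_sum_le_sum_abs _ _).trans (sum_le_sum fun j _ => ?_)
    rw [abs_mul]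
    exact mul_le_mul_of_nonneg_right (hm i j) (abs_nonneg _)
  have hA := hM.mul_sum_abs_le_card ht.le hd
  have hlt : t * (m * ∑ j, |d j|) < t * 1 :=
    calc t * (m * ∑ j, |d j|) = m * (t * ∑ j, |d j|) := by ring
      _ ≤ m * Fintype.card ι := mul_le_mul_of_nonneg_left hA hm0
      _ < t * 1 := by rwa [mul_one]
  have : 0 < t * d i := by
    linarith [lt_of_mul_lt_mul_left hlt ht.le, le_abs_self ((M *ᵥ d) i)]
  exact pos_of_mul_pos_right this ht.le

end Matrix

theorem stmt_13_general {n N : ℕ} (hN : 0 < N)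
    (K : Matrix (Fin n) (Fin n) ℝ) (hK : K.PosDef)
    (hKpos : ∀ v w : Fin n, 0 < K v w)
    (ψ : Fin n → ℝ) (hψ : ∀ v : Fin n, ψ v = 1 ∨ ψ v = -1)
    (w : Fin N → Fin n)
    (γ : ℝ) (hγ : ∀ v : Fin n, 2 * K v v < γ)
    (c : Fin N → ℝ)
    (hc : (Matrix.of (fun i j : Fin N =>
          (Matrix.diagonal ψ * K * Matrix.diagonal ψ) (w i) (w j)) +
        (γ * (N : ℝ)) • (1 : Matrix (Fin N) (Fin N) ℝ)) *ᵥ c = fun i => ψ (w i)) :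
    ∀ v : Fin n,
      Real.sign (∑ i : Fin N, c i * (Matrix.diagonal ψ * K * Matrix.diagonal ψ) v (w i)) =
        ψ v := by
  intro v
  have hψsq : ∀ u, ψ u * ψ u = 1 := fun u => by rcases hψ u with h | h <;> simp [h]
  have hγpos : 0 < γ := by linarith [hKpos v v, hγ v]
  have hKbound : ∀ a b, |K a b| ≤ γ / 2 := fun a b => by
    rw [abs_of_pos (hKpos a b)]
    linarith [hK.posSemidef.two_mul_apply_le_add a b, hγ a, hγ b]
  have hsys : (K.submatrix w w + (γ * N) • 1) *ᵥ (fun i => ψ (w i) * c i) = 1 := by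
    apply mulVec_mul_eq_one_of_diagonal_mul_mul_diagonal_mulVec_eq fun i => hψsq (w i)
    rwa [← submatrix_diagonal_mul_mul_diagonal_add_smul_one hψsq]
  have hd := (hK.posSemidef.submatrix w).pos_of_add_smul_one_mulVec_eq_one
    (m := γ / 2) (fun i j => hKbound _ _)
    (by rw [Fintype.card_fin]; exact mul_lt_mul_of_pos_right (half_lt_self hγpos) (mod_cast hN))
    hsys
  have hy : ∑ i, c i * (diagonal ψ * K * diagonal ψ) v (w i) =
      ψ v * ∑ i, (ψ (w i) * c i) * K v (w i) := by
    simp only [diagonal_mul, mul_diagonal, mul_sum]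
    exact sum_congr rfl fun i _ => by ring
  have hpos : 0 < ∑ i, (ψ (w i) * c i) * K v (w i) :=
    sum_pos (fun i _ => mul_pos (hd i) (hKpos _ _)) ⟨⟨0, hN⟩, mem_univ _⟩
  rcases hψ v with h | h <;> rw [hy, h]
  · simpa using Real.sign_of_pos hpos
  · simpa using Real.sign_of_neg (neg_neg_of_pos hpos)

/-- Consistency of the binary-feature-augmented RLS classifier with `N` labels: if the
kernel `K` is symmetric positive definite with strictly positive entries, the labels
`y i = ψ (w i) ∈ {−1,1}` at the distinct nodes `w i` are correctly classified by the binary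
feature map `ψ`, and the regularization parameter satisfies `γ > 2 maxᵥ K(v,v)`, then the
RLS classification based on the augmented kernel `K_ψ = diag(ψ) K diag(ψ)` reproduces `ψ`:
`sign(y*_v) = ψ v` for all nodes `v`. -/
theorem stmt_13 {n N : ℕ} (hN : 0 < N)
    (K : Matrix (Fin n) (Fin n) ℝ) (hK : K.PosDef)
    (hKpos : ∀ v w : Fin n, 0 < K v w)
    (ψ : Fin n → ℝ) (hψ : ∀ v : Fin n, ψ v = 1 ∨ ψ v = -1)
    (w : Fin N → Fin n) (hw : Function.Injective w)
    (γ : ℝ) (hγ : ∀ v : Fin n, 2 * K v v < γ)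
    (c : Fin N → ℝ)
    (hc : (Matrix.of (fun i j : Fin N =>
          (Matrix.diagonal ψ * K * Matrix.diagonal ψ) (w i) (w j)) +
        (γ * (N : ℝ)) • (1 : Matrix (Fin N) (Fin N) ℝ)) *ᵥ c = fun i => ψ (w i)) :
    ∀ v : Fin n,
      Real.sign (∑ i : Fin N, c i * (Matrix.diagonal ψ * K * Matrix.diagonal ψ) v (w i)) =
        ψ v :=
  stmt_13_general hN K hK hKpos ψ hψ w γ hγ c hc
end

section
/- Let L ∈ ℝ^{n×n} be a generalized graph Laplacian (symmetric with L_{ij} ≤ 0 for i ≠ j), let d = max_i L_{ii}, and let ε > −d. If the operator norm satisfies ‖d·I_n − L‖ < d + ε, then the matrix ε·I_n + L is invertible and for every natural number s ≥ 1, all entries of ((ε·I_n + L)⁻¹)^s are nonnegative; moreover (ε·I_n + L)⁻¹ admits the Neumann series representation (1/(ε+d)) Σ_{k=0}^∞ (A/(ε+d))^k with A = d·I_n − L. -/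
set_option synthInstance.maxHeartbeats 1000000
set_option maxHeartbeats 1000000


open Matrix

lemma aux_pow_nonneg {n : ℕ} (X : Matrix (Fin n) (Fin n) ℝ)
    (hX : ∀ i j, 0 ≤ X i j) : ∀ s : ℕ, ∀ i j, 0 ≤ (X ^ s) i j := by
  intro s
  induction s with
  | zero =>
    intro i j
    simp only [pow_zero, Matrix.one_apply]
    split <;> norm_num
  | succ k ih =>
    intro i j
    rw [pow_succ, Matrix.mul_apply]
    exact Finset.sum_nonneg fun m _ => mul_nonneg (ih i m) (hX m j)

/-- Variational spline kernels are nonnegative: for a generalized graph Laplacian `L`,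
`d = maxᵢ Lᵢᵢ`, `ε > −d`, if the (ℓ²) operator norm of `d·I − L` is smaller than `d + ε`,
then `ε·I + L` is invertible, all entries of `((ε·I + L)⁻¹)^s` are nonnegative for every
`s ≥ 1`, and `(ε·I + L)⁻¹` is given by the Neumann series
`(1/(ε+d)) ∑ₖ (A/(ε+d))^k` with `A = d·I − L`. -/
theorem stmt_16 {n : ℕ} (L : Matrix (Fin n) (Fin n) ℝ) (hsymm : L.IsSymm)
    (hoff : ∀ i j : Fin n, i ≠ j → L i j ≤ 0)
    (d : ℝ) (hd : IsGreatest (Set.range fun i : Fin n => L i i) d)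
    (ε : ℝ) (hε : -d < ε)
    (hnorm : ‖Matrix.toEuclideanCLM (𝕜 := ℝ)
        (d • (1 : Matrix (Fin n) (Fin n) ℝ) - L)‖ < d + ε) :
    IsUnit (ε • (1 : Matrix (Fin n) (Fin n) ℝ) + L) ∧
      (∀ s : ℕ, 1 ≤ s → ∀ i j : Fin n,
        0 ≤ (((ε • (1 : Matrix (Fin n) (Fin n) ℝ) + L)⁻¹) ^ s) i j) ∧
      (ε • (1 : Matrix (Fin n) (Fin n) ℝ) + L)⁻¹ =
        (1 / (ε + d)) • ∑' k : ℕ,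
          ((1 / (ε + d)) • (d • (1 : Matrix (Fin n) (Fin n) ℝ) - L)) ^ k := by
  have hεd : 0 < ε + d := by linarith
  set A : Matrix (Fin n) (Fin n) ℝ := d • (1 : Matrix (Fin n) (Fin n) ℝ) - L with hA
  set B : Matrix (Fin n) (Fin n) ℝ := (1 / (ε + d)) • A with hB
  set M : Matrix (Fin n) (Fin n) ℝ := ε • (1 : Matrix (Fin n) (Fin n) ℝ) + L with hM
  -- entries of B are nonnegative
  have hBnn : ∀ i j, 0 ≤ B i j := by
    intro i j
    have hAnn : 0 ≤ A i j := by
      rcases eq_or_ne i j with rfl | hij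
      · have : L i i ≤ d := hd.2 ⟨i, rfl⟩
        simp [hA, Matrix.sub_apply, Matrix.smul_apply, Matrix.one_apply_eq]
        linarith
      · have := hoff i j hij
        simp [hA, Matrix.sub_apply, Matrix.smul_apply, Matrix.one_apply_ne hij]
        linarith
    exact mul_nonneg (by positivity) hAnn
  -- M = (ε+d) • (1 - B)
  have hεB : (ε + d) • B = A := by
    rw [hB, smul_smul, mul_one_div, div_self hεd.ne', one_smul]
  have hMfac : M = (ε + d) • ((1 : Matrix (Fin n) (Fin n) ℝ) - B) := by
    rw [smul_sub, hεB, hM, hA]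
    module
  -- transport to the CLM algebra
  set f := Matrix.toEuclideanCLM (𝕜 := ℝ) (n := Fin n) with hf
  have hfB : ‖f B‖ < 1 := by
    have h1 : f B = (1 / (ε + d)) • f A := by rw [hB]; exact map_smul f _ _
    have h2 : ‖f B‖ = ‖(1 / (ε + d) : ℝ)‖ * ‖f A‖ := by
      rw [h1]
      exact norm_smul (1 / (ε + d) : ℝ) (f A)
    rw [h2, Real.norm_eq_abs, abs_of_pos (by positivity), div_mul_eq_mul_div, one_mul,
      div_lt_one hεd]
    linarith [hnorm]
  have hsum : Summable fun k : ℕ => (f B) ^ k := summable_geometric_of_norm_lt_one hfB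
  -- pull back the geometric series
  let g : (EuclideanSpace ℝ (Fin n) →L[ℝ] EuclideanSpace ℝ (Fin n)) →ₗ[ℝ]
      Matrix (Fin n) (Fin n) ℝ :=
    { toFun := f.symm
      map_add' := fun x y => map_add f.symm x y
      map_smul' := fun c x => map_smul f.symm c x }
  have hgcont : Continuous g := g.continuous_of_finiteDimensional
  have hhs : HasSum (fun k : ℕ => (f B) ^ k) (∑' k : ℕ, (f B) ^ k) := hsum.hasSum
  have hhsB : HasSum (fun k : ℕ => B ^ k) (f.symm (∑' k : ℕ, (f B) ^ k)) := by
    have := hhs.map g.toAddMonoidHom hgcont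
    have heq : (⇑g.toAddMonoidHom ∘ fun k : ℕ => (f B) ^ k) = fun k : ℕ => B ^ k := by
      funext k
      show f.symm ((f B) ^ k) = B ^ k
      rw [← map_pow, StarAlgEquiv.symm_apply_apply]
    rwa [heq] at this
  set S : Matrix (Fin n) (Fin n) ℝ := ∑' k : ℕ, B ^ k with hS
  have hSval : S = f.symm (∑' k : ℕ, (f B) ^ k) := hhsB.tsum_eq
  -- entries of S are nonnegative
  have hSnn : ∀ i j, 0 ≤ S i j := by
    intro i j
    have heval : HasSum (fun k : ℕ => (B ^ k) i j) (S i j) := by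
      have : S = f.symm (∑' k : ℕ, (f B) ^ k) := hSval
      have h2 := hhsB
      rw [← hSval] at h2
      let e : Matrix (Fin n) (Fin n) ℝ →+ ℝ :=
        { toFun := fun X => X i j
          map_zero' := rfl
          map_add' := fun x y => rfl }
      have hecont : Continuous e := by
        show Continuous fun X : Matrix (Fin n) (Fin n) ℝ => X i j
        exact (continuous_apply j).comp (continuous_apply i)
      exact h2.map e hecont
    exact ge_of_tendsto heval.tendsto_sum_nat (Filter.Eventually.of_forall fun m =>
      Finset.sum_nonneg fun k _ => aux_pow_nonneg B hBnn k i j)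
  -- M * ((1/(ε+d)) • S) = 1
  have hmul : M * ((1 / (ε + d)) • S) = 1 := by
    have h1 : ((1 : Matrix (Fin n) (Fin n) ℝ) - B) * S = 1 := by
      have hfeq : f (((1 : Matrix (Fin n) (Fin n) ℝ) - B) * S) = f 1 := by
        rw [_root_.map_mul, map_sub, _root_.map_one, hSval, f.apply_symm_apply]
        exact mul_neg_geom_series (f B) hfB
      exact f.injective hfeq
    rw [hMfac, Matrix.smul_mul, Matrix.mul_smul, smul_smul, mul_one_div,
      div_self hεd.ne', one_smul, h1]
  have hunit : IsUnit M := by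
    refine ⟨⟨M, (1 / (ε + d)) • S, hmul, mul_eq_one_comm.mp hmul⟩, rfl⟩
  have hinv : M⁻¹ = (1 / (ε + d)) • S := Matrix.inv_eq_right_inv hmul
  refine ⟨hunit, ?_, hinv⟩
  intro s _ i j
  have hMinv_nn : ∀ i j, 0 ≤ M⁻¹ i j := by
    intro i j
    rw [hinv]
    exact mul_nonneg (by positivity) (hSnn i j)
  exact aux_pow_nonneg M⁻¹ hMinv_nn s i j
end

section
/- Let K ∈ ℝ^{n×n} be symmetric positive definite, let W = {w_1,…,w_N} be distinct indices, and define the squared power function P_{W,K}(v)² = K(v,v) − k_v ᵀ (K_W)⁻¹ k_v, where k_v = (K(v,w_1),…,K(v,w_N))ᵀ and K_W is the N×N submatrix with entries K(w_i,w_j). Let ψ ∈ ℝⁿ with ψ_v ∈ {−1,1} and K_ψ = diag(ψ)·K·diag(ψ). Then the power function is independent of the binary feature map: P_{W,K_ψ}(v)² = P_{W,K}(v)² for every node v and every such ψ. -/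
open Matrix

/-- The power function is independent of the binary feature map: for a symmetric positive
definite kernel `K`, distinct nodes `w₁,…,w_N`, and a binary (±1) feature map `ψ`, the
squared power function of the augmented kernel `K_ψ = diag(ψ) K diag(ψ)` equals that of
`K` at every node:
`K_ψ(v,v) − k_vᵀ (K_ψ)_W⁻¹ k_v = K(v,v) − k_vᵀ K_W⁻¹ k_v`. -/
theorem stmt_17 {n N : ℕ} (K : Matrix (Fin n) (Fin n) ℝ) (hK : K.PosDef)
    (w : Fin N → Fin n) (hw : Function.Injective w)
    (ψ : Fin n → ℝ) (hψ : ∀ v : Fin n, ψ v = 1 ∨ ψ v = -1) :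
    ∀ v : Fin n,
      (Matrix.diagonal ψ * K * Matrix.diagonal ψ) v v -
          (fun i : Fin N => (Matrix.diagonal ψ * K * Matrix.diagonal ψ) v (w i)) ⬝ᵥ
            ((Matrix.of (fun i j : Fin N =>
                (Matrix.diagonal ψ * K * Matrix.diagonal ψ) (w i) (w j)))⁻¹ *ᵥ
              fun i : Fin N => (Matrix.diagonal ψ * K * Matrix.diagonal ψ) v (w i)) =
        K v v -
          (fun i : Fin N => K v (w i)) ⬝ᵥ
            ((Matrix.of (fun i j : Fin N => K (w i) (w j)))⁻¹ *ᵥ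
              fun i : Fin N => K v (w i)) := by
  intro v
  have hsq : ∀ a : Fin n, ψ a * ψ a = 1 := by
    intro a; rcases hψ a with h | h <;> rw [h] <;> norm_num
  have hentry : ∀ a b : Fin n,
      (Matrix.diagonal ψ * K * Matrix.diagonal ψ) a b = ψ a * K a b * ψ b := by
    intro a b
    simp [Matrix.mul_diagonal, Matrix.diagonal_mul, mul_comm]
  set D : Matrix (Fin N) (Fin N) ℝ := Matrix.diagonal (fun i => ψ (w i)) with hD
  set A : Matrix (Fin N) (Fin N) ℝ := Matrix.of (fun i j : Fin N => K (w i) (w j)) with hA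
  have hDD : D * D = 1 := by
    rw [hD, Matrix.diagonal_mul_diagonal]
    simp [hsq]
  have hDinv : D⁻¹ = D := Matrix.inv_eq_right_inv hDD
  have hsub : Matrix.of (fun i j : Fin N =>
      (Matrix.diagonal ψ * K * Matrix.diagonal ψ) (w i) (w j)) = D * A * D := by
    ext i j
    simp [hentry, hD, hA, Matrix.mul_diagonal, Matrix.diagonal_mul, mul_comm]
  have hinv : (Matrix.of (fun i j : Fin N =>
      (Matrix.diagonal ψ * K * Matrix.diagonal ψ) (w i) (w j)))⁻¹ = D * A⁻¹ * D := by
    rw [hsub, Matrix.mul_inv_rev, Matrix.mul_inv_rev, hDinv, mul_assoc]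
  set k : Fin N → ℝ := fun i => K v (w i) with hk
  have hkψ : (fun i : Fin N => (Matrix.diagonal ψ * K * Matrix.diagonal ψ) v (w i))
      = ψ v • (D *ᵥ k) := by
    ext i
    simp [hentry, hD, hk, Matrix.mulVec_diagonal, mul_comm, mul_left_comm]
  rw [hinv, hkψ, hentry]
  have hDk : D *ᵥ (D *ᵥ k) = k := by
    rw [Matrix.mulVec_mulVec, hDD, Matrix.one_mulVec]
  have hDsymm : Dᵀ = D := Matrix.diagonal_transpose _
  calc ψ v * K v v * ψ v -
        (ψ v • (D *ᵥ k)) ⬝ᵥ ((D * A⁻¹ * D) *ᵥ (ψ v • (D *ᵥ k)))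
      = (ψ v * ψ v) * K v v -
        (ψ v * ψ v) * ((D *ᵥ k) ⬝ᵥ ((D * A⁻¹ * D) *ᵥ (D *ᵥ k))) := by
        rw [Matrix.mulVec_smul, smul_dotProduct, dotProduct_smul,
          smul_eq_mul, smul_eq_mul]
        ring
    _ = K v v - (D *ᵥ k) ⬝ᵥ ((D * A⁻¹ * D) *ᵥ (D *ᵥ k)) := by rw [hsq]; ring
    _ = K v v - k ⬝ᵥ (A⁻¹ *ᵥ k) := by
        rw [← Matrix.mulVec_mulVec, ← Matrix.mulVec_mulVec, hDk,
          Matrix.dotProduct_mulVec (D *ᵥ k), ← Matrix.mulVec_transpose, hDsymm, hDk]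
end

section
/- Let K ∈ ℝ^{n×n} be symmetric positive definite, ψ ∈ ℝⁿ with ψ_v ∈ {−1,1}, K_ψ = diag(ψ)·K·diag(ψ), W = {w_1,…,w_N} distinct indices, y ∈ ℝⁿ, and γ > 0. Let y°_v = Σ_i c°_i K_ψ(v,w_i) with c° = ((K_ψ)_W)⁻¹ y|_W be the interpolant of the data (w_i, y(w_i)), and let y*_v = Σ_i c_i K_ψ(v,w_i) with c = ((K_ψ)_W + γN·I_N)⁻¹ y|_W be the RLS solution, where y|_W = (y(w_1),…,y(w_N))ᵀ. Then for every node v, |y°_v − y*_v| ≤ (γN·√(K(v,v)) / (λ_min(K_W) + γN)) · ‖y‖_{K_ψ}, where λ_min(K_W) is the smallest eigenvalue of the submatrix K_W of K, and ‖y‖_{K_ψ} = √(yᵀ (K_ψ)⁻¹ y). -/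
/-!
Put `A = (K_ψ)_W` and `B = A + γN·I`. Since `A⁻¹ - B⁻¹ = γN·A⁻¹B⁻¹`, the error at `v` is
`γN·⟨k, B⁻¹y_W⟩_{A⁻¹}` with `k = K_ψ(v, W)`, and Cauchy–Schwarz for the form `A⁻¹` bounds it by
`γN·‖k‖_{A⁻¹}‖B⁻¹y_W‖_{A⁻¹}`. Compressing a positive definite form to a coordinate subspace can
only shrink the dual norm, so `‖k‖_{A⁻¹}² ≤ K_ψ(v,v) = K(v,v)` and `‖y_W‖_{A⁻¹} ≤ ‖y‖_{K_ψ}`.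
Finally `A ≥ λ_min(K_W)·I`, because conjugating by the signs `ψ` preserves Rayleigh quotients,
and this gives `‖Bu‖_{A⁻¹} ≥ (λ_min + γN)‖u‖_{A⁻¹}`.
-/

open Matrix

namespace Matrix

variable {m κ : Type*}

theorem PosDef.transpose_eq {M : Matrix m m ℝ} (hM : M.PosDef) : Mᵀ = M := by
  simpa using hM.isHermitian.eq

variable [Fintype m]

theorem PosSemidef.dotProduct_mulVec_sq_le {M : Matrix m m ℝ} (hM : M.PosSemidef) (x y : m → ℝ) :
    (x ⬝ᵥ (M *ᵥ y)) ^ 2 ≤ (x ⬝ᵥ (M *ᵥ x)) * (y ⬝ᵥ (M *ᵥ y)) := by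
  let := M.toSeminormedAddCommGroup hM
  let := M.toInnerProductSpace hM
  have h := real_inner_mul_inner_self_le x y
  change (M *ᵥ y) ⬝ᵥ x * ((M *ᵥ y) ⬝ᵥ x) ≤ (M *ᵥ x) ⬝ᵥ x * ((M *ᵥ y) ⬝ᵥ y) at h
  simpa only [dotProduct_comm _ x, dotProduct_comm _ y, sq] using h

theorem PosDef.dotProduct_mulVec_comm {M : Matrix m m ℝ} (hM : M.PosDef) (x y : m → ℝ) :
    x ⬝ᵥ (M *ᵥ y) = y ⬝ᵥ (M *ᵥ x) := by
  rw [dotProduct_mulVec, ← mulVec_transpose, hM.transpose_eq, dotProduct_comm]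

variable [DecidableEq m]

namespace PosDef

variable {M : Matrix m m ℝ}

theorem isUnit_det (hM : M.PosDef) : IsUnit M.det := (isUnit_iff_isUnit_det M).1 hM.isUnit

theorem mulVec_inv_mulVec (hM : M.PosDef) (x : m → ℝ) : M *ᵥ (M⁻¹ *ᵥ x) = x := by
  rw [mulVec_mulVec, mul_nonsing_inv _ hM.isUnit_det, one_mulVec]

theorem inv_mulVec_mulVec (hM : M.PosDef) (x : m → ℝ) : M⁻¹ *ᵥ (M *ᵥ x) = x := by
  rw [mulVec_mulVec, nonsing_inv_mul _ hM.isUnit_det, one_mulVec]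

theorem row_dotProduct_inv_mulVec_row (hM : M.PosDef) (i : m) : M i ⬝ᵥ (M⁻¹ *ᵥ M i) = M i i := by
  have hrow : M i = M *ᵥ Pi.single i 1 := by
    rw [mulVec_single_one]; ext j; exact (congrFun (congrFun hM.transpose_eq i) j).symm
  rw [hrow, hM.inv_mulVec_mulVec, dotProduct_single, mul_one, mulVec_single_one]

theorem dotProduct_conj_inv_mulVec_le [Fintype κ] [DecidableEq κ] (hM : M.PosDef)
    (P : Matrix m κ ℝ) (z : m → ℝ) :
    (Pᵀ *ᵥ z) ⬝ᵥ ((Pᵀ * M * P)⁻¹ *ᵥ (Pᵀ *ᵥ z)) ≤ z ⬝ᵥ (M⁻¹ *ᵥ z) := by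
  set S := Pᵀ * M * P
  by_cases hS : IsUnit S.det
  swap
  · rw [nonsing_inv_apply_not_isUnit _ hS, zero_mulVec, dotProduct_zero]
    exact hM.inv.posSemidef.dotProduct_mulVec_nonneg z
  -- `P *ᵥ c` is the `M`-orthogonal projection of `M⁻¹ *ᵥ z` onto the range of `P`.
  set c := S⁻¹ *ᵥ (Pᵀ *ᵥ z)
  have hSc : S *ᵥ c = Pᵀ *ᵥ z := by rw [mulVec_mulVec, mul_nonsing_inv _ hS, one_mulVec]
  have hPc : ∀ u, (P *ᵥ c) ⬝ᵥ u = c ⬝ᵥ (Pᵀ *ᵥ u) := fun u => by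
    rw [dotProduct_comm, dotProduct_mulVec, ← mulVec_transpose, dotProduct_comm]
  have e1 : (P *ᵥ c) ⬝ᵥ (M *ᵥ (P *ᵥ c)) = c ⬝ᵥ (Pᵀ *ᵥ z) := by
    rw [hPc, mulVec_mulVec, mulVec_mulVec, hSc]
  have e2 : (P *ᵥ c) ⬝ᵥ (M *ᵥ (M⁻¹ *ᵥ z)) = c ⬝ᵥ (Pᵀ *ᵥ z) := by
    rw [hM.mulVec_inv_mulVec, hPc]
  have e3 : (M⁻¹ *ᵥ z) ⬝ᵥ (M *ᵥ (P *ᵥ c)) = c ⬝ᵥ (Pᵀ *ᵥ z) := by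
    rw [hM.dotProduct_mulVec_comm, e2]
  have e4 : (M⁻¹ *ᵥ z) ⬝ᵥ (M *ᵥ (M⁻¹ *ᵥ z)) = z ⬝ᵥ (M⁻¹ *ᵥ z) := by
    rw [hM.mulVec_inv_mulVec, dotProduct_comm]
  have h0 := hM.posSemidef.dotProduct_mulVec_nonneg (P *ᵥ c - M⁻¹ *ᵥ z)
  rw [star_trivial, mulVec_sub, dotProduct_sub, sub_dotProduct, sub_dotProduct, e1, e2, e3, e4]
    at h0
  rw [dotProduct_comm]
  linarith

theorem dotProduct_submatrix_inv_mulVec_le [Fintype κ] [DecidableEq κ] (hM : M.PosDef)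
    (w : κ → m) (z : m → ℝ) :
    (z ∘ w) ⬝ᵥ ((M.submatrix w w)⁻¹ *ᵥ (z ∘ w)) ≤ z ⬝ᵥ (M⁻¹ *ᵥ z) := by
  have hP : ((1 : Matrix m m ℝ).submatrix id w)ᵀ = (1 : Matrix m m ℝ).submatrix w id := by
    rw [transpose_submatrix, transpose_one]
  have hPz : (1 : Matrix m m ℝ).submatrix w id *ᵥ z = z ∘ w := by
    ext i; simp [mulVec, dotProduct, one_apply]
  have hS : (1 : Matrix m m ℝ).submatrix w id * M * (1 : Matrix m m ℝ).submatrix id w =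
      M.submatrix w w := by
    ext i j; simp [mul_apply, one_apply]
  simpa only [hP, hPz, hS] using
    hM.dotProduct_conj_inv_mulVec_le ((1 : Matrix m m ℝ).submatrix id w) z

theorem diagonal_mul_mul_diagonal (hM : M.PosDef) {d : m → ℝ} (hd : ∀ i, d i * d i = 1) :
    (diagonal d * M * diagonal d).PosDef := by
  have hU : IsUnit (diagonal d) :=
    IsUnit.of_mul_eq_one (diagonal d) (by rw [diagonal_mul_diagonal]; simp [hd])
  have hstar : star (diagonal d) = diagonal d := by
    rw [star_eq_conjTranspose, diagonal_conjTranspose, star_trivial]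
  simpa only [hstar] using (IsUnit.posDef_star_left_conjugate_iff hU).2 hM

section RayleighLowerBound

variable {μ : ℝ} (hM : M.PosDef) (hμ₀ : 0 ≤ μ) (hμ : ∀ x, μ * (x ⬝ᵥ x) ≤ x ⬝ᵥ (M *ᵥ x))
include hM hμ₀ hμ

theorem mul_dotProduct_inv_mulVec_le (x : m → ℝ) : μ * (x ⬝ᵥ (M⁻¹ *ᵥ x)) ≤ x ⬝ᵥ x := by
  set p := M⁻¹ *ᵥ x
  have hp : μ * (p ⬝ᵥ p) ≤ p ⬝ᵥ x := by simpa only [p, hM.mulVec_inv_mulVec] using hμ p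
  have hcs : (x ⬝ᵥ p) ^ 2 ≤ (x ⬝ᵥ x) * (p ⬝ᵥ p) := by
    simpa using (PosSemidef.one : (1 : Matrix m m ℝ).PosSemidef).dotProduct_mulVec_sq_le x p
  have hxp : 0 ≤ x ⬝ᵥ p := by simpa using hM.inv.posSemidef.dotProduct_mulVec_nonneg x
  rcases hxp.eq_or_lt with h | h
  · rw [← h, mul_zero]; exact dotProduct_self_star_nonneg x
  · rw [dotProduct_comm p x] at hp
    refine le_of_mul_le_mul_right ?_ h
    calc μ * (x ⬝ᵥ p) * (x ⬝ᵥ p) = μ * (x ⬝ᵥ p) ^ 2 := by ring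
      _ ≤ μ * ((x ⬝ᵥ x) * (p ⬝ᵥ p)) := mul_le_mul_of_nonneg_left hcs hμ₀
      _ = (x ⬝ᵥ x) * (μ * (p ⬝ᵥ p)) := by ring
      _ ≤ (x ⬝ᵥ x) * (x ⬝ᵥ p) := mul_le_mul_of_nonneg_left hp (dotProduct_self_star_nonneg x)

theorem sq_add_mul_dotProduct_inv_mulVec_le {t : ℝ} (ht : 0 ≤ t) (x : m → ℝ) :
    (μ + t) ^ 2 * (x ⬝ᵥ (M⁻¹ *ᵥ x)) ≤
      ((M + t • 1) *ᵥ x) ⬝ᵥ (M⁻¹ *ᵥ ((M + t • 1) *ᵥ x)) := by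
  have hexp : ((M + t • 1) *ᵥ x) ⬝ᵥ (M⁻¹ *ᵥ ((M + t • 1) *ᵥ x)) =
      x ⬝ᵥ (M *ᵥ x) + 2 * t * (x ⬝ᵥ x) + t ^ 2 * (x ⬝ᵥ (M⁻¹ *ᵥ x)) := by
    rw [add_mulVec, smul_mulVec, one_mulVec, mulVec_add, mulVec_smul, hM.inv_mulVec_mulVec]
    simp only [add_dotProduct, dotProduct_add, smul_dotProduct, dotProduct_smul, smul_eq_mul]
    have hMx : (M *ᵥ x) ⬝ᵥ (M⁻¹ *ᵥ x) = x ⬝ᵥ x := by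
      rw [dotProduct_comm, hM.dotProduct_mulVec_comm, hM.mulVec_inv_mulVec]
    rw [hMx, dotProduct_comm (M *ᵥ x) x]
    ring
  have h1 := hμ x
  have h2 := mul_dotProduct_inv_mulVec_le hM hμ₀ hμ x
  rw [hexp]
  nlinarith [mul_le_mul_of_nonneg_left h2 hμ₀, mul_le_mul_of_nonneg_left h2 ht]

theorem abs_dotProduct_inv_mulVec_sub_le {t : ℝ} (ht : 0 ≤ t) (k y : m → ℝ) :
    |k ⬝ᵥ (M⁻¹ *ᵥ y) - k ⬝ᵥ ((M + t • 1)⁻¹ *ᵥ y)| ≤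
      t / (μ + t) * √(k ⬝ᵥ (M⁻¹ *ᵥ k)) * √(y ⬝ᵥ (M⁻¹ *ᵥ y)) := by
  rcases ht.eq_or_lt with rfl | ht
  · simp
  have hB : (M + t • 1).PosDef := hM.add_posSemidef (PosSemidef.one.smul ht.le)
  set u := (M + t • 1)⁻¹ *ᵥ y
  have hBu : (M + t • 1) *ᵥ u = y := hB.mulVec_inv_mulVec y
  have hdiff : M⁻¹ *ᵥ y - u = t • (M⁻¹ *ᵥ u) := by
    rw [← hBu, add_mulVec, mulVec_add, hM.inv_mulVec_mulVec, smul_mulVec, one_mulVec,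
      mulVec_smul, add_sub_cancel_left]
  have hcs := hM.inv.posSemidef.dotProduct_mulVec_sq_le k u
  have hu := sq_add_mul_dotProduct_inv_mulVec_le hM hμ₀ hμ ht.le u
  rw [hBu] at hu
  have hk := hM.inv.posSemidef.dotProduct_mulVec_nonneg k
  have hkey : (μ + t) * |k ⬝ᵥ (M⁻¹ *ᵥ u)| ≤ √(k ⬝ᵥ (M⁻¹ *ᵥ k)) * √(y ⬝ᵥ (M⁻¹ *ᵥ y)) := by
    rw [← Real.sqrt_mul (by simpa using hk), ← abs_of_pos (add_pos_of_nonneg_of_pos hμ₀ ht),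
      ← abs_mul]
    refine Real.abs_le_sqrt ?_
    calc ((μ + t) * (k ⬝ᵥ (M⁻¹ *ᵥ u))) ^ 2 = (μ + t) ^ 2 * (k ⬝ᵥ (M⁻¹ *ᵥ u)) ^ 2 := by ring
      _ ≤ (μ + t) ^ 2 * ((k ⬝ᵥ (M⁻¹ *ᵥ k)) * (u ⬝ᵥ (M⁻¹ *ᵥ u))) := by gcongr
      _ = (k ⬝ᵥ (M⁻¹ *ᵥ k)) * ((μ + t) ^ 2 * (u ⬝ᵥ (M⁻¹ *ᵥ u))) := by ring
      _ ≤ (k ⬝ᵥ (M⁻¹ *ᵥ k)) * (y ⬝ᵥ (M⁻¹ *ᵥ y)) := by gcongr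
  rw [← dotProduct_sub, hdiff, dotProduct_smul, smul_eq_mul, abs_mul, abs_of_pos ht, mul_assoc]
  calc t * |k ⬝ᵥ (M⁻¹ *ᵥ u)| = t / (μ + t) * ((μ + t) * |k ⬝ᵥ (M⁻¹ *ᵥ u)|) := by
        field_simp
    _ ≤ _ := by gcongr

end RayleighLowerBound

end PosDef

section DiagonalConjugation

variable {d : m → ℝ}

theorem diagonal_mul_mul_diagonal_apply_self (hd : ∀ i, d i * d i = 1) (M : Matrix m m ℝ)
    (i : m) :
    (diagonal d * M * diagonal d) i i = M i i := by
  rw [mul_diagonal, diagonal_mul]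
  linear_combination M i i * hd i

theorem submatrix_diagonal_mul_mul_diagonal [Fintype κ] [DecidableEq κ] (M : Matrix m m ℝ)
    (w : κ → m) :
    (diagonal d * M * diagonal d).submatrix w w =
      diagonal (d ∘ w) * M.submatrix w w * diagonal (d ∘ w) := by
  ext i j
  simp [mul_diagonal, diagonal_mul]

theorem mul_dotProduct_le_diagonal_mul_mul_diagonal (hd : ∀ i, d i * d i = 1)
    {M : Matrix m m ℝ} {μ : ℝ} (hμ : ∀ x, μ * (x ⬝ᵥ x) ≤ x ⬝ᵥ (M *ᵥ x)) (x : m → ℝ) :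
    μ * (x ⬝ᵥ x) ≤ x ⬝ᵥ ((diagonal d * M * diagonal d) *ᵥ x) := by
  have hD : ∀ u v, (diagonal d *ᵥ u) ⬝ᵥ v = u ⬝ᵥ (diagonal d *ᵥ v) := fun u v => by
    simp only [dotProduct, mulVec_diagonal]
    exact Finset.sum_congr rfl fun i _ => by ring
  have hDD : diagonal d *ᵥ (diagonal d *ᵥ x) = x := by
    rw [mulVec_mulVec, diagonal_mul_diagonal]
    simp [hd]
  simpa only [hD, hDD, mulVec_mulVec, Matrix.mul_assoc] using hμ (diagonal d *ᵥ x)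

end DiagonalConjugation

end Matrix

/-- Bound on the regularization error: for the augmented kernel `K_ψ = diag(ψ) K diag(ψ)`
with binary feature map `ψ`, interpolant `y°` and RLS solution `y*` with data `y` on the
distinct nodes `w i` and parameter `γ > 0`, one has for every node `v`
`|y°_v − y*_v| ≤ γN √(K(v,v)) / (λ_min(K_W) + γN) · ‖y‖_{K_ψ}`,
where `λ_min(K_W)` is the smallest eigenvalue of the submatrix `K_W` (characterized as the
greatest `μ` with `μ‖x‖² ≤ xᵀ K_W x`) and `‖y‖_{K_ψ} = √(yᵀ K_ψ⁻¹ y)`. -/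
theorem stmt_18 {n N : ℕ} (K : Matrix (Fin n) (Fin n) ℝ) (hK : K.PosDef)
    (ψ : Fin n → ℝ) (hψ : ∀ v : Fin n, ψ v = 1 ∨ ψ v = -1)
    (w : Fin N → Fin n) (hw : Function.Injective w)
    (y : Fin n → ℝ) (γ : ℝ) (hγ : 0 < γ)
    (lmin : ℝ)
    (hlmin : IsGreatest {μ : ℝ | ∀ x : Fin N → ℝ,
        μ * (x ⬝ᵥ x) ≤ x ⬝ᵥ ((Matrix.of fun i j : Fin N => K (w i) (w j)) *ᵥ x)} lmin)
    (Kψ : Matrix (Fin n) (Fin n) ℝ)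
    (hKψ : Kψ = Matrix.diagonal ψ * K * Matrix.diagonal ψ)
    (KψW : Matrix (Fin N) (Fin N) ℝ)
    (hKψW : KψW = Matrix.of fun i j : Fin N => Kψ (w i) (w j))
    (c0 c : Fin N → ℝ)
    (hc0 : c0 = KψW⁻¹ *ᵥ fun i => y (w i))
    (hc : c = (KψW + (γ * (N : ℝ)) • (1 : Matrix (Fin N) (Fin N) ℝ))⁻¹ *ᵥ fun i => y (w i)) :
    ∀ v : Fin n,
      |(∑ i : Fin N, c0 i * Kψ v (w i)) - ∑ i : Fin N, c i * Kψ v (w i)| ≤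
        (γ * (N : ℝ) * Real.sqrt (K v v) / (lmin + γ * (N : ℝ))) *
          Real.sqrt (y ⬝ᵥ (Kψ⁻¹ *ᵥ y)) := by
  intro v
  have hψ2 : ∀ p, ψ p * ψ p = 1 := fun p => by rcases hψ p with h | h <;> simp [h]
  have hKψPD : Kψ.PosDef := hKψ ▸ hK.diagonal_mul_mul_diagonal hψ2
  have hlower : ∀ x, lmin * (x ⬝ᵥ x) ≤ x ⬝ᵥ (Kψ.submatrix w w *ᵥ x) := by
    rw [hKψ, submatrix_diagonal_mul_mul_diagonal]
    exact mul_dotProduct_le_diagonal_mul_mul_diagonal (fun i => hψ2 (w i)) hlmin.1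
  have hlmin0 : 0 ≤ lmin := hlmin.2 fun x => by
    have h := (hK.posSemidef.submatrix w).dotProduct_mulVec_nonneg x
    rw [star_trivial] at h
    rwa [zero_mul]
  have hk : (Kψ v ∘ w) ⬝ᵥ ((Kψ.submatrix w w)⁻¹ *ᵥ (Kψ v ∘ w)) ≤ K v v := by
    have h := hKψPD.dotProduct_submatrix_inv_mulVec_le w (Kψ v)
    have hvv : Kψ v v = K v v := hKψ ▸ diagonal_mul_mul_diagonal_apply_self hψ2 K v
    rwa [hKψPD.row_dotProduct_inv_mulVec_row, hvv] at h
  have hy := hKψPD.dotProduct_submatrix_inv_mulVec_le w y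
  have herr := (hKψPD.submatrix hw).abs_dotProduct_inv_mulVec_sub_le hlmin0 hlower
    (mul_nonneg hγ.le N.cast_nonneg) (Kψ v ∘ w) (y ∘ w)
  subst hc0 hc hKψW
  calc _ = |(Kψ v ∘ w) ⬝ᵥ ((Kψ.submatrix w w)⁻¹ *ᵥ (y ∘ w)) -
        (Kψ v ∘ w) ⬝ᵥ ((Kψ.submatrix w w + (γ * N) • 1)⁻¹ *ᵥ (y ∘ w))| := by
        rw [dotProduct_comm (Kψ v ∘ w), dotProduct_comm (Kψ v ∘ w)]; rfl
    _ ≤ _ := herr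
    _ ≤ γ * N / (lmin + γ * N) * √(K v v) * √(y ⬝ᵥ (Kψ⁻¹ *ᵥ y)) := by
        have : 0 ≤ γ * N / (lmin + γ * N) := by positivity
        gcongr
    _ = _ := by ring
end
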